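/- arXiv:2405.03100 — 2 statements merged into one kernel-verified Lean document; each statement's English description precedes it below -/
import Mathlib

section
/- (Generalized EPR steering paradox theorem, 2-setting protocol.) Let N > M ≥ 1, n = 2^(N−M), O = Fin (2^M), and k = 2 settings. Let ρ_B be a density matrix on ℂ^n and ρ̃ : Fin 2 → O → Matrix n n ℂ a family such that: (i) each ρ̃ ℓ a is an unnormalized pure state; (ii) ∑_{a∈O} ρ̃ ℓ a = ρ_B for ℓ = 0, 1; (iii) within each setting the nonzero conditional states are pairwise non-proportional (no one is a positive real multiple of another). Then ρ̃ admits an LHS model if and only if the two settings produce the same set of nonzero conditional states, i.e. {ρ̃ 0 a | a ∈ O, ρ̃ 0 a ≠ 0} = {ρ̃ 1 a | a ∈ O, ρ̃ 1 a ≠ 0}. In particular, whenever the two sets differ, the EPR steering paradox '2_Q = (1+δ)_C' with 0 ≤ δ < 1 arises. -/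
open Matrix BigOperators
open scoped ComplexOrder

noncomputable section

/-- A density matrix: positive semidefinite with trace 1. -/
def IsDensityMatrix {n : ℕ} (A : Matrix (Fin n) (Fin n) ℂ) : Prop :=
  A.PosSemidef ∧ A.trace = 1

/-- An unnormalized pure state: a nonnegative real multiple of a rank-one
projection `v vᴴ` onto a unit vector `v`. -/
def IsUnnormalizedPure {n : ℕ} (A : Matrix (Fin n) (Fin n) ℂ) : Prop :=
  ∃ (c : ℝ) (v : Fin n → ℂ), 0 ≤ c ∧ star v ⬝ᵥ v = 1 ∧ A = c • vecMulVec v (star v)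

/-- `A` is a positive real multiple of `B`. -/
def IsPosMultiple {n : ℕ} (A B : Matrix (Fin n) (Fin n) ℂ) : Prop :=
  ∃ c : ℝ, 0 < c ∧ A = c • B

/-- A local-hidden-state (LHS) model for a family of unnormalized conditional
states `ρt ℓ a` (setting `ℓ`, outcome `a`). -/
def HasLHSModel {n k : ℕ} {O : Type*} [Fintype O]
    (ρt : Fin k → O → Matrix (Fin n) (Fin n) ℂ) : Prop :=
  ∃ (m : ℕ) (w : Fin m → ℝ) (ρ : Fin m → Matrix (Fin n) (Fin n) ℂ)
    (p : O → Fin k → Fin m → ℝ),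
    (∀ ξ, 0 ≤ w ξ) ∧ ((∑ ξ, w ξ) = 1) ∧
    (∀ ξ, IsDensityMatrix (ρ ξ)) ∧
    (∀ a ℓ ξ, 0 ≤ p a ℓ ξ) ∧
    (∀ ℓ ξ, (∑ a, p a ℓ ξ) = 1) ∧
    (∀ ℓ a, ρt ℓ a = ∑ ξ, p a ℓ ξ • w ξ • ρ ξ)

/-!
Every nonzero term `p a ℓ ξ • w ξ • ρ ξ` of an LHS decomposition of the pure state `ρt ℓ a` is
dominated by it, and a positive semidefinite matrix dominated by a rank-one one is a multiple of
it; so every hidden state that can produce `a` in setting `ℓ` is the normalization of `ρt ℓ a`.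
Since the nonzero states of a setting are pairwise non-proportional, such a hidden state answers
`a` with certainty, and `ρt ℓ a` is its normalization times the total weight of the hidden states
equal to it, independently of `ℓ`. Hence a hidden state producing `ρt ℓ a` in one setting produces
the same state in the other. Conversely, if both settings produce the same nonzero states, these
states, normalized and weighted by their traces, are a hidden ensemble answered deterministically.
-/

theorem Matrix.PosSemidef.eq_trace_smul_vecMulVec_of_sub {n : Type*} [Fintype n] {v : n → ℂ}
    (hv : star v ⬝ᵥ v = 1) {A : Matrix n n ℂ} {c : ℝ} (hA : A.PosSemidef)
    (hsub : (c • vecMulVec v (star v) - A).PosSemidef) :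
    A = A.trace • vecMulVec v (star v) := by
  set P := vecMulVec v (star v)
  have hP : ∀ x, P *ᵥ x = (star v ⬝ᵥ x) • v := fun x => by simp [P, vecMulVec_mulVec]
  have hker : ∀ x, star v ⬝ᵥ x = 0 → A *ᵥ x = 0 := fun x hx => by
    have h := hsub.dotProduct_mulVec_nonneg x
    rw [sub_mulVec, smul_mulVec, hP, hx, zero_smul, smul_zero, zero_sub, dotProduct_neg,
      neg_nonneg] at h
    exact (hA.dotProduct_mulVec_zero_iff x).mp (le_antisymm h (hA.dotProduct_mulVec_nonneg x))
  -- `A` vanishes on `v⊥`, so `A = A P`; taking adjoints, `A = P A` as well.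
  have hAP : A * P = A := by
    refine ext_iff_mulVec.mpr fun x => ?_
    have h := hker (x - P *ᵥ x) (by rw [dotProduct_sub, hP, dotProduct_smul, hv]; simp)
    rw [mulVec_sub, sub_eq_zero, mulVec_mulVec] at h
    exact h.symm
  have hPA : P * A = A := by
    simpa [P, hA.isHermitian.eq, conjTranspose_mul] using congrArg (·ᴴ) hAP
  have hPAP : A = (star v ⬝ᵥ A *ᵥ v) • P := by
    calc A = P * A * P := by rw [hPA, hAP]
      _ = (star v ⬝ᵥ A *ᵥ v) • P := by
        simp only [P, vecMulVec_mul, vecMul_vecMulVec, dotProduct_mulVec, vecMulVec_smul]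
  have htr : A.trace = star v ⬝ᵥ A *ᵥ v := by
    conv_lhs => rw [hPAP]
    rw [trace_smul, trace_vecMulVec, dotProduct_comm v, hv, smul_eq_mul, mul_one]
  rwa [htr]

theorem Matrix.PosSemidef.re_trace_pos {n : Type*} [Fintype n] {A : Matrix n n ℂ}
    (hA : A.PosSemidef) (hA0 : A ≠ 0) : 0 < A.trace.re :=
  (Complex.nonneg_iff.mp hA.trace_nonneg).1.lt_of_ne' fun h =>
    hA0 (hA.trace_eq_zero_iff.mp (Complex.ext h (Complex.nonneg_iff.mp hA.trace_nonneg).2.symm))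

section States

variable {n : ℕ}

theorem Matrix.PosSemidef.isDensityMatrix_inv_re_trace_smul {A : Matrix (Fin n) (Fin n) ℂ}
    (hA : A.PosSemidef) (hA0 : A ≠ 0) : IsDensityMatrix ((A.trace.re)⁻¹ • A) := by
  refine ⟨hA.smul (inv_nonneg.mpr (hA.re_trace_pos hA0).le), ?_⟩
  have hre : A.trace = A.trace.re :=
    Complex.eq_re_of_ofReal_le (r := 0) (by simpa using hA.trace_nonneg)
  rw [trace_smul, Complex.real_smul]
  nth_rw 2 [hre]
  rw [← Complex.ofReal_mul, inv_mul_cancel₀ (hA.re_trace_pos hA0).ne', Complex.ofReal_one]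

theorem IsDensityMatrix.ne_zero {σ : Matrix (Fin n) (Fin n) ℂ} (hσ : IsDensityMatrix σ) :
    σ ≠ 0 := fun h => by simpa [h] using hσ.2

theorem IsUnnormalizedPure.posSemidef {A : Matrix (Fin n) (Fin n) ℂ}
    (hA : IsUnnormalizedPure A) : A.PosSemidef := by
  obtain ⟨c, v, hc, -, rfl⟩ := hA
  exact (posSemidef_vecMulVec_self_star v).smul hc

namespace IsPosMultiple

variable {A B C : Matrix (Fin n) (Fin n) ℂ}

theorem refl (A : Matrix (Fin n) (Fin n) ℂ) : IsPosMultiple A A :=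
  ⟨1, one_pos, (one_smul _ _).symm⟩

theorem symm (h : IsPosMultiple A B) : IsPosMultiple B A := by
  obtain ⟨c, hc, rfl⟩ := h
  exact ⟨c⁻¹, inv_pos.mpr hc, (inv_smul_smul₀ hc.ne' B).symm⟩

theorem trans (hAB : IsPosMultiple A B) (hBC : IsPosMultiple B C) : IsPosMultiple A C := by
  obtain ⟨c, hc, rfl⟩ := hBC
  obtain ⟨c', hc', rfl⟩ := hAB
  exact ⟨c' * c, mul_pos hc' hc, (mul_smul _ _ _).symm⟩

theorem ne_zero (h : IsPosMultiple A B) (hB : B ≠ 0) : A ≠ 0 := by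
  obtain ⟨c, hc, rfl⟩ := h
  exact smul_ne_zero hc.ne' hB

theorem eq_of_trace_eq_one (hB : IsPosMultiple A B) (hC : IsPosMultiple A C)
    (hBtr : B.trace = 1) (hCtr : C.trace = 1) : B = C := by
  obtain ⟨b, hb, rfl⟩ := hB
  obtain ⟨c, hc, hbc⟩ := hC
  have hcb : c = b := by
    simpa [hBtr, hCtr] using congrArg trace hbc.symm
  rw [hcb] at hbc
  exact (smul_right_inj hb.ne').mp hbc

end IsPosMultiple

theorem IsUnnormalizedPure.isPosMultiple_of_sub {X σ : Matrix (Fin n) (Fin n) ℂ}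
    (hX : IsUnnormalizedPure X) (hσ : IsDensityMatrix σ) {s : ℝ} (hs : 0 < s)
    (hsub : (X - s • σ).PosSemidef) : IsPosMultiple X σ := by
  obtain ⟨c, v, -, hv, rfl⟩ := hX
  have hσP : σ = vecMulVec v (star v) := by
    have h := (hσ.1.smul hs.le).eq_trace_smul_vecMulVec_of_sub hv hsub
    rw [trace_smul, hσ.2, smul_one_smul] at h
    exact (smul_right_inj hs.ne').mp h
  rw [← hσP, ← sub_smul] at hsub
  have hcs : 0 ≤ c - s := by simpa [hσ.2] using hsub.trace_nonneg
  exact ⟨c, by linarith, by rw [hσP]⟩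

end States

section LHSModels

variable {n k : ℕ} {O Ξ : Type*}

def nonzeroStates (f : O → Matrix (Fin n) (Fin n) ℂ) : Set (Matrix (Fin n) (Fin n) ℂ) :=
  {A | ∃ a, f a ≠ 0 ∧ f a = A}

def PairwiseNonProportional (f : O → Matrix (Fin n) (Fin n) ℂ) : Prop :=
  ∀ a a', a ≠ a' → f a ≠ 0 → f a' ≠ 0 → ¬ IsPosMultiple (f a) (f a')

theorem PairwiseNonProportional.injOn {f : O → Matrix (Fin n) (Fin n) ℂ}
    (hf : PairwiseNonProportional f) : Set.InjOn f {a | f a ≠ 0} := fun a ha a' _ h =>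
  by_contra fun hne => hf a a' hne ha (h ▸ ha) (h ▸ IsPosMultiple.refl _)

variable [Fintype O] [Fintype Ξ]

/-- `HasLHSModel`, with the hidden states indexed by an arbitrary finite type. -/
structure IsLHSModel (ρt : Fin k → O → Matrix (Fin n) (Fin n) ℂ) (w : Ξ → ℝ)
    (ρ : Ξ → Matrix (Fin n) (Fin n) ℂ) (p : O → Fin k → Ξ → ℝ) : Prop where
  weight_nonneg : ∀ ξ, 0 ≤ w ξ
  sum_weight : ∑ ξ, w ξ = 1
  isDensityMatrix : ∀ ξ, IsDensityMatrix (ρ ξ)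
  response_nonneg : ∀ a ℓ ξ, 0 ≤ p a ℓ ξ
  sum_response : ∀ ℓ ξ, ∑ a, p a ℓ ξ = 1
  eq_sum : ∀ ℓ a, ρt ℓ a = ∑ ξ, p a ℓ ξ • w ξ • ρ ξ

namespace IsLHSModel

variable {ρt : Fin k → O → Matrix (Fin n) (Fin n) ℂ} {w : Ξ → ℝ}
  {ρ : Ξ → Matrix (Fin n) (Fin n) ℂ} {p : O → Fin k → Ξ → ℝ}

theorem hasLHSModel (h : IsLHSModel ρt w ρ p) : HasLHSModel ρt := by
  let e := (Fintype.equivFin Ξ).symm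
  refine ⟨Fintype.card Ξ, w ∘ e, ρ ∘ e, fun a ℓ => p a ℓ ∘ e, fun _ => h.weight_nonneg _, ?_,
    fun _ => h.isDensityMatrix _, fun _ _ _ => h.response_nonneg _ _ _,
    fun _ _ => h.sum_response _ _, fun ℓ a => ?_⟩
  · rw [← h.sum_weight]
    exact e.sum_comp w
  · rw [h.eq_sum]
    exact (e.sum_comp fun ξ => p a ℓ ξ • w ξ • ρ ξ).symm

theorem isPosMultiple_of_response_ne_zero (h : IsLHSModel ρt w ρ p) {ℓ : Fin k} {a : O} {ξ : Ξ}
    (hpure : IsUnnormalizedPure (ρt ℓ a)) (hp : p a ℓ ξ ≠ 0) (hw : w ξ ≠ 0) :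
    IsPosMultiple (ρt ℓ a) (ρ ξ) := by
  classical
  refine hpure.isPosMultiple_of_sub (h.isDensityMatrix ξ) (s := p a ℓ ξ * w ξ)
    (mul_pos ((h.response_nonneg a ℓ ξ).lt_of_ne' hp) ((h.weight_nonneg ξ).lt_of_ne' hw)) ?_
  rw [mul_smul, h.eq_sum, ← Finset.sum_erase_eq_sub (Finset.mem_univ ξ)]
  exact posSemidef_sum _ fun η _ =>
    ((h.isDensityMatrix η).1.smul (h.weight_nonneg η)).smul (h.response_nonneg a ℓ η)

theorem response_eq_one (h : IsLHSModel ρt w ρ p) {ℓ : Fin k} {a : O} {ξ : Ξ}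
    (hpure : ∀ b, IsUnnormalizedPure (ρt ℓ b)) (hdist : PairwiseNonProportional (ρt ℓ))
    (hw : w ξ ≠ 0) (ha : IsPosMultiple (ρt ℓ a) (ρ ξ)) : p a ℓ ξ = 1 := by
  have hρ0 := (h.isDensityMatrix ξ).ne_zero
  have hother : ∀ b ∈ Finset.univ, b ≠ a → p b ℓ ξ = 0 := fun b _ hba => by
    by_contra hb
    have hb := h.isPosMultiple_of_response_ne_zero (hpure b) hb hw
    exact hdist b a hba (hb.ne_zero hρ0) (ha.ne_zero hρ0) (hb.trans ha.symm)
  rw [← h.sum_response ℓ ξ, Finset.sum_eq_single a hother (by simp)]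

/-- The right-hand side does not depend on the setting `ℓ`: this is what forces all settings to
produce the same nonzero states. -/
theorem eq_sum_ite (h : IsLHSModel ρt w ρ p) {ℓ : Fin k} {a : O}
    (hpure : ∀ b, IsUnnormalizedPure (ρt ℓ b)) (hdist : PairwiseNonProportional (ρt ℓ))
    {σ : Matrix (Fin n) (Fin n) ℂ} (hσ : σ.trace = 1) (ha : IsPosMultiple (ρt ℓ a) σ) :
    ρt ℓ a = ∑ ξ, if ρ ξ = σ then w ξ • ρ ξ else 0 := by
  rw [h.eq_sum ℓ a]
  refine Finset.sum_congr rfl fun ξ _ => ?_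
  rcases eq_or_ne (w ξ) 0 with hw | hw
  · simp [hw]
  split_ifs with hρσ
  · rw [h.response_eq_one hpure hdist hw (hρσ ▸ ha), one_smul]
  · have hp : p a ℓ ξ = 0 := by
      by_contra hp
      exact hρσ ((h.isPosMultiple_of_response_ne_zero (hpure a) hp hw).eq_of_trace_eq_one ha
        (h.isDensityMatrix ξ).2 hσ)
    rw [hp, zero_smul]

theorem nonzeroStates_subset (h : IsLHSModel ρt w ρ p)
    (hpure : ∀ ℓ a, IsUnnormalizedPure (ρt ℓ a)) (hdist : ∀ ℓ, PairwiseNonProportional (ρt ℓ))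
    (ℓ ℓ' : Fin k) : nonzeroStates (ρt ℓ) ⊆ nonzeroStates (ρt ℓ') := by
  rintro _ ⟨a, ha, rfl⟩
  obtain ⟨ξ, -, hξ⟩ := Finset.exists_ne_zero_of_sum_ne_zero (h.eq_sum ℓ a ▸ ha)
  have hw : w ξ ≠ 0 := left_ne_zero_of_smul (right_ne_zero_of_smul hξ)
  have hresp : ∑ b, p b ℓ' ξ ≠ 0 := by rw [h.sum_response]; exact one_ne_zero
  obtain ⟨a', -, ha'⟩ := Finset.exists_ne_zero_of_sum_ne_zero hresp
  have hσ := (h.isDensityMatrix ξ).2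
  have hℓ := h.isPosMultiple_of_response_ne_zero (hpure ℓ a) (left_ne_zero_of_smul hξ) hw
  have hℓ' := h.isPosMultiple_of_response_ne_zero (hpure ℓ' a') ha' hw
  refine ⟨a', hℓ'.ne_zero (h.isDensityMatrix ξ).ne_zero, ?_⟩
  rw [h.eq_sum_ite (hpure ℓ) (hdist ℓ) hσ hℓ, h.eq_sum_ite (hpure ℓ') (hdist ℓ') hσ hℓ']

end IsLHSModel

theorem HasLHSModel.nonzeroStates_subset {ρt : Fin k → O → Matrix (Fin n) (Fin n) ℂ}
    (h : HasLHSModel ρt) (hpure : ∀ ℓ a, IsUnnormalizedPure (ρt ℓ a))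
    (hdist : ∀ ℓ, PairwiseNonProportional (ρt ℓ)) (ℓ ℓ' : Fin k) :
    nonzeroStates (ρt ℓ) ⊆ nonzeroStates (ρt ℓ') := by
  obtain ⟨m, w, ρ, p, h₁, h₂, h₃, h₄, h₅, h₆⟩ := h
  exact IsLHSModel.nonzeroStates_subset ⟨h₁, h₂, h₃, h₄, h₅, h₆⟩ hpure hdist ℓ ℓ'

/-- The hidden states are the nonzero states of the reference setting `ℓ₀`, normalized and
weighted by their traces; each one answers, in every setting, the outcome producing it. -/
theorem hasLHSModel_of_nonzeroStates_eq {ρt : Fin k → O → Matrix (Fin n) (Fin n) ℂ} (ℓ₀ : Fin k)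
    (hpsd : ∀ a, (ρt ℓ₀ a).PosSemidef) (htr : (∑ a, ρt ℓ₀ a).trace = 1)
    (hinj : ∀ ℓ, Set.InjOn (ρt ℓ) {a | ρt ℓ a ≠ 0})
    (hsame : ∀ ℓ, nonzeroStates (ρt ℓ) = nonzeroStates (ρt ℓ₀)) : HasLHSModel ρt := by
  classical
  let w : {a // ρt ℓ₀ a ≠ 0} → ℝ := fun a => (ρt ℓ₀ a).trace.re
  have hw : ∀ a, 0 < w a := fun a => (hpsd a).re_trace_pos a.2
  have hwρ : ∀ a, w a • (w a)⁻¹ • ρt ℓ₀ a = ρt ℓ₀ a := fun a => smul_inv_smul₀ (hw a).ne' _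
  refine IsLHSModel.hasLHSModel (w := w) (ρ := fun a => (w a)⁻¹ • ρt ℓ₀ a)
    (p := fun b ℓ a => if ρt ℓ b = ρt ℓ₀ a then 1 else 0)
    ⟨fun a => (hw a).le, ?_, fun a => (hpsd a).isDensityMatrix_inv_re_trace_smul a.2,
      fun _ _ _ => by positivity, fun ℓ a => ?_, fun ℓ b => ?_⟩
  · have hsub : ∑ a, w a = ∑ a ∈ Finset.univ.filter (fun a => ρt ℓ₀ a ≠ 0), (ρt ℓ₀ a).trace.re :=
      (Finset.sum_subtype _ (fun _ => Finset.mem_filter_univ _) fun a => (ρt ℓ₀ a).trace.re).symm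
    rw [hsub, Finset.sum_filter_of_ne (p := fun a => ρt ℓ₀ a ≠ 0) fun a _ h hρ => h (by simp [hρ]),
      ← Complex.re_sum, ← trace_sum, htr, Complex.one_re]
  · obtain ⟨b₀, hb₀, hb₀a⟩ : ρt ℓ₀ a ∈ nonzeroStates (ρt ℓ) := hsame ℓ ▸ ⟨a, a.2, rfl⟩
    rw [Finset.sum_eq_single b₀ (fun b _ hb => if_neg fun h => hb ?_) (by simp), if_pos hb₀a]
    exact (hinj ℓ hb₀ (by simp [h, a.2]) (hb₀a.trans h.symm)).symm
  · simp only [ite_smul, one_smul, zero_smul, hwρ]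
    by_cases hb : ρt ℓ b = 0
    · exact hb.trans (Finset.sum_eq_zero fun a _ => if_neg fun h => a.2 (h ▸ hb)).symm
    obtain ⟨a₀, ha₀, ha₀b⟩ : ρt ℓ b ∈ nonzeroStates (ρt ℓ₀) := hsame ℓ ▸ ⟨b, hb, rfl⟩
    rw [Finset.sum_eq_single ⟨a₀, ha₀⟩ (fun a _ ha => if_neg fun h => ha ?_) (by simp),
      if_pos ha₀b.symm, ha₀b]
    exact Subtype.ext (hinj ℓ₀ a.2 ha₀ (h.symm.trans ha₀b.symm))

end LHSModels

theorem generalized_epr_steering_paradox_general {N M : ℕ}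
    (ρB : Matrix (Fin (2 ^ (N - M))) (Fin (2 ^ (N - M))) ℂ)
    (hρB : IsDensityMatrix ρB)
    (ρt : Fin 2 → Fin (2 ^ M) → Matrix (Fin (2 ^ (N - M))) (Fin (2 ^ (N - M))) ℂ)
    (hpure : ∀ ℓ a, IsUnnormalizedPure (ρt ℓ a))
    (hsum : ∀ ℓ, (∑ a, ρt ℓ a) = ρB)
    (hdist : ∀ ℓ a a', a ≠ a' → ρt ℓ a ≠ 0 → ρt ℓ a' ≠ 0 →
      ¬ IsPosMultiple (ρt ℓ a) (ρt ℓ a')) :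
    HasLHSModel ρt ↔
      {A | ∃ a, ρt 0 a ≠ 0 ∧ ρt 0 a = A} = {A | ∃ a, ρt 1 a ≠ 0 ∧ ρt 1 a = A} := by
  refine ⟨fun h => (h.nonzeroStates_subset hpure hdist 0 1).antisymm
    (h.nonzeroStates_subset hpure hdist 1 0), fun h => ?_⟩
  refine hasLHSModel_of_nonzeroStates_eq 0 (fun a => (hpure 0 a).posSemidef)
    (by rw [hsum, hρB.2]) (fun ℓ => PairwiseNonProportional.injOn (hdist ℓ)) ?_
  rw [Fin.forall_fin_two]
  exact ⟨rfl, h.symm⟩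

/-- Generalized EPR steering paradox theorem, 2-setting
protocol: Bob's conditional states (unnormalized pure states summing to his
reduced density matrix in each of the two settings, pairwise non-proportional
within each setting when nonzero) admit an LHS model if and only if the two
settings produce the same set of nonzero conditional states. -/
theorem generalized_epr_steering_paradox {N M : ℕ} (hM : 1 ≤ M) (hNM : M < N)
    (ρB : Matrix (Fin (2 ^ (N - M))) (Fin (2 ^ (N - M))) ℂ)
    (hρB : IsDensityMatrix ρB)
    (ρt : Fin 2 → Fin (2 ^ M) → Matrix (Fin (2 ^ (N - M))) (Fin (2 ^ (N - M))) ℂ)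
    (hpure : ∀ ℓ a, IsUnnormalizedPure (ρt ℓ a))
    (hsum : ∀ ℓ, (∑ a, ρt ℓ a) = ρB)
    (hdist : ∀ ℓ a a', a ≠ a' → ρt ℓ a ≠ 0 → ρt ℓ a' ≠ 0 →
      ¬ IsPosMultiple (ρt ℓ a) (ρt ℓ a')) :
    HasLHSModel ρt ↔
      {A | ∃ a, ρt 0 a ≠ 0 ∧ ρt 0 a = A} = {A | ∃ a, ρt 1 a ≠ 0 ∧ ρt 1 a = A} :=
  generalized_epr_steering_paradox_general ρB hρB ρt hpure hsum hdist
end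
end

section
/- (Ray-set obstruction, covering the cases with repeated conditional states.) Let n ≥ 1, O a finite outcome set, k ≥ 1, ρ_B a density matrix on ℂ^n, and ρ̃ : Fin k → O → Matrix n n ℂ a family with each ρ̃ ℓ a an unnormalized pure state and ∑_{a∈O} ρ̃ ℓ a = ρ_B for every ℓ. If ρ̃ admits an LHS model, then every setting determines the same set of rays: for all settings ℓ, ℓ' and every a with ρ̃ ℓ a ≠ 0, there exists a' with ρ̃ ℓ' a' ≠ 0 such that ρ̃ ℓ a is a positive real multiple of ρ̃ ℓ' a'. In particular, if some setting has a nonzero conditional state that is not proportional to any conditional state of another setting, then no LHS model exists. -/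
/-!
In an LHS model each conditional state `ρt ℓ a = ∑ ξ, p a ℓ ξ • w ξ • ρ ξ` is a sum of positive
semidefinite terms. A positive semidefinite summand of a rank-one matrix `c • v vᴴ` vanishes on
`v^⊥`, hence is a multiple of `v vᴴ`; so every hidden state `ρ ξ` that contributes to a nonzero
pure `ρt ℓ a` lies on its ray. Since the response probabilities of any other setting `ℓ'` sum to
one, that same `ρ ξ` contributes to some `ρt ℓ' a'`, which therefore lies on the same ray.
-/

open Matrix BigOperators
open scoped ComplexOrder

noncomputable section

namespace Matrix

variable {𝕜 n : Type*} [RCLike 𝕜] [Fintype n]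

theorem PosSemidef.mulVec_eq_zero_of_add {A B : Matrix n n 𝕜} (hA : A.PosSemidef)
    (hB : B.PosSemidef) {x : n → 𝕜} (hx : star x ⬝ᵥ (A + B) *ᵥ x = 0) : A *ᵥ x = 0 := by
  rw [add_mulVec, dotProduct_add] at hx
  have hAx := ((add_eq_zero_iff_of_nonneg (hA.dotProduct_mulVec_nonneg x)
    (hB.dotProduct_mulVec_nonneg x)).mp hx).1
  exact (hA.dotProduct_mulVec_zero_iff x).mp hAx

theorem IsHermitian.eq_trace_smul_of_mulVec_eq_zero {M : Matrix n n 𝕜} (hM : M.IsHermitian)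
    {v : n → 𝕜} (hv : star v ⬝ᵥ v = 1) (hker : ∀ x, star v ⬝ᵥ x = 0 → M *ᵥ x = 0) :
    M = M.trace • vecMulVec v (star v) := by
  set P := vecMulVec v (star v)
  have hMP : M * P = M := by
    refine ext_iff_mulVec.mpr fun x => ?_
    have hperp : star v ⬝ᵥ (x - (star v ⬝ᵥ x) • v) = 0 := by
      rw [dotProduct_sub, dotProduct_smul, hv, smul_eq_mul, mul_one, sub_self]
    rw [← mulVec_mulVec, vecMulVec_mulVec, eq_comm, ← sub_eq_zero, ← mulVec_sub]
    simpa using hker _ hperp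
  have hPM : P * M = M := by
    simpa [P, conjTranspose_vecMulVec, hM.eq] using congrArg (·ᴴ) hMP
  obtain ⟨s, hs⟩ : ∃ s : 𝕜, M = s • P := by
    refine ⟨star v ᵥ* M ⬝ᵥ v, ?_⟩
    calc M = P * M * P := by rw [hPM, hMP]
      _ = _ := by rw [vecMulVec_mul, vecMulVec_mul_vecMulVec, vecMulVec_smul]
  rw [hs, trace_smul, trace_vecMulVec, dotProduct_comm, hv, smul_eq_mul, mul_one]

theorem PosSemidef.eq_trace_smul_of_add_eq_smul_vecMulVec {A B : Matrix n n 𝕜}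
    (hA : A.PosSemidef) (hB : B.PosSemidef) {v : n → 𝕜} (hv : star v ⬝ᵥ v = 1) {c : 𝕜}
    (h : A + B = c • vecMulVec v (star v)) : A = A.trace • vecMulVec v (star v) := by
  refine hA.isHermitian.eq_trace_smul_of_mulVec_eq_zero hv fun x hx =>
    hA.mulVec_eq_zero_of_add hB ?_
  rw [h, smul_mulVec, vecMulVec_mulVec, hx]
  simp

end Matrix

section States

variable {n : ℕ} {A B C : Matrix (Fin n) (Fin n) ℂ}

theorem IsPosMultiple.symm_s9 (h : IsPosMultiple A B) : IsPosMultiple B A := by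
  obtain ⟨c, hc, rfl⟩ := h
  exact ⟨c⁻¹, inv_pos.mpr hc, by rw [smul_smul, inv_mul_cancel₀ hc.ne', one_smul]⟩

theorem IsPosMultiple.trans_s9 (hAB : IsPosMultiple A B) (hBC : IsPosMultiple B C) :
    IsPosMultiple A C := by
  obtain ⟨c, hc, rfl⟩ := hAB
  obtain ⟨d, hd, rfl⟩ := hBC
  exact ⟨c * d, mul_pos hc hd, smul_smul c d C⟩

theorem IsPosMultiple.ne_zero_s9 (h : IsPosMultiple A B) (hB : B ≠ 0) : A ≠ 0 := by
  obtain ⟨c, hc, rfl⟩ := h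
  exact smul_ne_zero hc.ne' hB

theorem IsDensityMatrix.ne_zero_s9 (hA : IsDensityMatrix A) : A ≠ 0 := by
  rintro rfl
  simpa using hA.2

theorem isPosMultiple_sum_smul_of_isUnnormalizedPure {ι : Type*} [Fintype ι] {q : ι → ℝ}
    {ρ : ι → Matrix (Fin n) (Fin n) ℂ} (hq : ∀ i, 0 ≤ q i) (hρ : ∀ i, IsDensityMatrix (ρ i))
    (hpure : IsUnnormalizedPure (∑ i, q i • ρ i)) {i : ι} (hi : 0 < q i) :
    IsPosMultiple (∑ j, q j • ρ j) (ρ i) := by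
  classical
  obtain ⟨c, v, -, hv, hsum⟩ := hpure
  have hsupport : ∀ j, 0 < q j → ρ j = vecMulVec v (star v) := by
    intro j hj
    have hsplit := Finset.add_sum_erase Finset.univ (fun j => q j • ρ j) (Finset.mem_univ j)
    rw [hsum, ← Complex.coe_smul c] at hsplit
    have hrest := posSemidef_sum (Finset.univ.erase j) fun j _ => (hρ j).1.smul (hq j)
    have hj' := ((hρ j).1.smul (hq j)).eq_trace_smul_of_add_eq_smul_vecMulVec hrest hv hsplit
    rw [← Complex.coe_smul, trace_smul, (hρ j).2, smul_eq_mul, mul_one, Complex.coe_smul] at hj'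
    exact smul_right_injective _ hj.ne' hj'
  have hterm : ∀ j, q j • ρ j = q j • vecMulVec v (star v) := by
    intro j
    rcases (hq j).eq_or_lt with hj | hj
    · simp [← hj]
    · rw [hsupport j hj]
  refine ⟨∑ j, q j, Finset.sum_pos' (fun j _ => hq j) ⟨i, Finset.mem_univ i, hi⟩, ?_⟩
  rw [Finset.sum_congr rfl fun j _ => hterm j, ← Finset.sum_smul, hsupport i hi]

end States

theorem lhs_implies_same_rays_general {n : ℕ}
    {O : Type*} [Fintype O] {k : ℕ}
    (ρt : Fin k → O → Matrix (Fin n) (Fin n) ℂ)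
    (hpure : ∀ ℓ a, IsUnnormalizedPure (ρt ℓ a))
    (hLHS : HasLHSModel ρt) :
    ∀ ℓ ℓ' : Fin k, ∀ a, ρt ℓ a ≠ 0 →
      ∃ a', ρt ℓ' a' ≠ 0 ∧ IsPosMultiple (ρt ℓ a) (ρt ℓ' a') := by
  obtain ⟨m, w, ρ, p, hw, -, hρ, hp, hpsum, hmodel⟩ := hLHS
  simp only [smul_smul] at hmodel
  have hpw : ∀ a ℓ ξ, 0 ≤ p a ℓ ξ * w ξ := fun a ℓ ξ => mul_nonneg (hp a ℓ ξ) (hw ξ)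
  have hray : ∀ ℓ a ξ, 0 < p a ℓ ξ * w ξ → IsPosMultiple (ρt ℓ a) (ρ ξ) := by
    intro ℓ a ξ hξ
    have hpure' := hpure ℓ a
    rw [hmodel] at hpure' ⊢
    exact isPosMultiple_sum_smul_of_isUnnormalizedPure (hpw a ℓ) hρ hpure' hξ
  intro ℓ ℓ' a ha
  obtain ⟨ξ, -, hterm⟩ := Finset.exists_ne_zero_of_sum_ne_zero (hmodel ℓ a ▸ ha)
  have hξ : 0 < p a ℓ ξ * w ξ := (hpw a ℓ ξ).lt_of_ne' (left_ne_zero_of_smul hterm)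
  obtain ⟨a', -, ha'⟩ := Finset.exists_ne_zero_of_sum_ne_zero (hpsum ℓ' ξ ▸ one_ne_zero)
  have hξ' : 0 < p a' ℓ' ξ * w ξ :=
    mul_pos ((hp a' ℓ' ξ).lt_of_ne' ha') (pos_of_mul_pos_right hξ (hp a ℓ ξ))
  exact ⟨a', (hray ℓ' a' ξ hξ').ne_zero_s9 (hρ ξ).ne_zero_s9,
    (hray ℓ a ξ hξ).trans_s9 (hray ℓ' a' ξ hξ').symm_s9⟩

/-- ray-set obstruction: if Bob's conditional states (all
unnormalized pure states summing to `ρB` in every setting) admit an LHS model,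
then every setting determines the same set of rays: any nonzero conditional
state of one setting is a positive real multiple of some nonzero conditional
state of any other setting. -/
theorem lhs_implies_same_rays {n : ℕ} (hn : 1 ≤ n)
    {O : Type*} [Fintype O] {k : ℕ} (hk : 1 ≤ k)
    (ρB : Matrix (Fin n) (Fin n) ℂ) (hρB : IsDensityMatrix ρB)
    (ρt : Fin k → O → Matrix (Fin n) (Fin n) ℂ)
    (hpure : ∀ ℓ a, IsUnnormalizedPure (ρt ℓ a))
    (hsum : ∀ ℓ, (∑ a, ρt ℓ a) = ρB)
    (hLHS : HasLHSModel ρt) :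
    ∀ ℓ ℓ' : Fin k, ∀ a, ρt ℓ a ≠ 0 →
      ∃ a', ρt ℓ' a' ≠ 0 ∧ IsPosMultiple (ρt ℓ a) (ρt ℓ' a') :=
  lhs_implies_same_rays_general ρt hpure hLHS
end
end
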